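/- arXiv:2011.07725 — 3 statements merged into one kernel-verified Lean document; each statement's English description precedes it below -/
import Mathlib

section
/- Let h* > 0 and let f* : ℝ → ℝ be three times differentiable satisfying f*'''(η) + (1/2) f*(η) f*''(η) = 0 for all η ≥ 0, f*(0) = 0, f*'(0) = h*^{1/2}, and f*'(η) → 0 as η → ∞ (the condition that h* is a zero of the Sakiadis transformation function Γ(h*) = λ(h*)^{−4} h* − 1 with λ(h*) = (lim f*' + h*^{1/2})^{1/2}). Then f(η) := h*^{−1/4} · f*(h*^{−1/4} η) is a solution of the Sakiadis problem: f'''(η) + (1/2) f(η) f''(η) = 0 for all η ≥ 0, f(0) = 0, f'(0) = 1, and f'(η) → 0 as η → ∞. -/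
open Real Filter Topology

/-- `f` is three times differentiable. -/
def ThreeDiff (f : ℝ → ℝ) : Prop :=
  Differentiable ℝ f ∧ Differentiable ℝ (deriv f) ∧ Differentiable ℝ (deriv (deriv f))

/-- The Sakiadis equation f''' + (1/2) f f'' = 0 on the half line. -/
def SakEq (f : ℝ → ℝ) : Prop :=
  ∀ η : ℝ, 0 ≤ η → deriv (deriv (deriv f)) η + (1 / 2) * f η * deriv (deriv f) η = 0

/-- `f` is a solution of the Sakiadis problem. -/
def SakSol (f : ℝ → ℝ) : Prop :=
  ThreeDiff f ∧ SakEq f ∧ f 0 = 0 ∧ deriv f 0 = 1 ∧ Tendsto (deriv f) atTop (𝓝 0)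

lemma diff_scale (g : ℝ → ℝ) (hg : Differentiable ℝ g) (a c : ℝ) :
    Differentiable ℝ (fun η => a * g (c * η)) :=
  ((hg.comp (differentiable_id.const_mul c)).const_mul a)

lemma deriv_scale (g : ℝ → ℝ) (hg : Differentiable ℝ g) (a c : ℝ) :
    deriv (fun η => a * g (c * η)) = fun η => (a * c) * deriv g (c * η) := by
  funext η
  have h1 : HasDerivAt (fun η : ℝ => c * η) c η := by
    simpa using (hasDerivAt_id η).const_mul c
  have h2 := ((hg (c * η)).hasDerivAt.comp η h1).const_mul a
  have h2' : HasDerivAt (fun η => a * g (c * η)) (a * (deriv g (c * η) * c)) η := by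
    simpa [Function.comp] using h2
  rw [h2'.deriv]; ring

theorem stmt9 (hstar : ℝ) (hpos : 0 < hstar) (fstar : ℝ → ℝ) (hf : ThreeDiff fstar)
    (heq : SakEq fstar) (hic1 : fstar 0 = 0)
    (hic2 : deriv fstar 0 = hstar ^ ((1 : ℝ) / 2))
    (hbc : Tendsto (deriv fstar) atTop (𝓝 0)) :
    SakSol (fun η => hstar ^ (-(1 : ℝ) / 4) * fstar (hstar ^ (-(1 : ℝ) / 4) * η)) := by
  obtain ⟨hd1, hd2, hd3⟩ := hf
  set c : ℝ := hstar ^ (-(1 : ℝ) / 4) with hc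
  have hcpos : 0 < c := rpow_pos_of_pos hpos _
  have e1 : deriv (fun η => c * fstar (c * η)) = fun η => (c * c) * deriv fstar (c * η) :=
    deriv_scale fstar hd1 c c
  have e2 : deriv (deriv (fun η => c * fstar (c * η)))
      = fun η => (c * c * c) * deriv (deriv fstar) (c * η) := by
    rw [e1, deriv_scale (deriv fstar) hd2 (c * c) c]
  have e3 : deriv (deriv (deriv (fun η => c * fstar (c * η))))
      = fun η => (c * c * c * c) * deriv (deriv (deriv fstar)) (c * η) := by
    rw [e2, deriv_scale (deriv (deriv fstar)) hd3 (c * c * c) c]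
  have hcc : c * c = hstar ^ (-(1 : ℝ) / 2) := by
    rw [hc, ← rpow_add hpos]; norm_num
  refine ⟨⟨diff_scale fstar hd1 c c, ?_, ?_⟩, ?_, ?_, ?_, ?_⟩
  · rw [e1]; exact diff_scale (deriv fstar) hd2 (c * c) c
  · rw [e2]; exact diff_scale (deriv (deriv fstar)) hd3 (c * c * c) c
  · intro η hη
    rw [e3, e2]
    have h0 := heq (c * η) (mul_nonneg hcpos.le hη)
    simp only
    linear_combination (c * c * c * c) * h0
  · simp [hic1]
  · rw [e1]
    simp only [mul_zero]
    rw [hic2, hcc, ← rpow_add hpos]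
    norm_num
  · rw [e1]
    have hT : Tendsto (fun η : ℝ => c * η) atTop atTop :=
      Tendsto.const_mul_atTop hcpos tendsto_id
    have := (hbc.comp hT).const_mul (c * c)
    simpa using this
end

section
/- Let β ∈ ℝ and h* > 0, and let f* : ℝ → ℝ be three times differentiable satisfying f*'''(η) + f*(η) f*''(η) + β (h* − (f*'(η))²) = 0 for all η ≥ 0, f*(0) = 0, f*'(0) = 0, and f*'(η) → h*^{1/2} as η → ∞ (the condition that h* is a zero of the Falkner–Skan transformation function Γ(h*) = λ(h*)^{−4} h* − 1 with λ(h*) = (lim f*')^{1/2}). Then f(η) := h*^{−1/4} · f*(h*^{−1/4} η) is a solution of the Falkner–Skan model: f'''(η) + f(η) f''(η) + β (1 − (f'(η))²) = 0 for all η ≥ 0, f(0) = 0, f'(0) = 0, and f'(η) → 1 as η → ∞. -/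
open Real Filter Topology

/-- The extended Falkner–Skan equation f''' + f f'' + β (h - (f')²) = 0 on the half line. -/
def FSExtEq (β h : ℝ) (f : ℝ → ℝ) : Prop :=
  ∀ η : ℝ, 0 ≤ η →
    deriv (deriv (deriv f)) η + f η * deriv (deriv f) η + β * (h - (deriv f η) ^ 2) = 0

/-- `f` is a solution of the Falkner–Skan model with parameter `β`. -/
def FSSol (β : ℝ) (f : ℝ → ℝ) : Prop :=
  ThreeDiff f ∧ FSExtEq β 1 f ∧ f 0 = 0 ∧ deriv f 0 = 0 ∧ Tendsto (deriv f) atTop (𝓝 1)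

lemma scale_deriv (u : ℝ → ℝ) (hu : Differentiable ℝ u) (a c : ℝ) :
    deriv (fun η => a * u (c * η)) = fun η => a * c * deriv u (c * η) := by
  funext η
  have h1 : HasDerivAt (fun η : ℝ => c * η) c η := by
    simpa using (hasDerivAt_id η).const_mul c
  have h2 : HasDerivAt (fun η => u (c * η)) (deriv u (c * η) * c) η :=
    (hu (c * η)).hasDerivAt.comp η h1
  have := (h2.const_mul a).deriv
  rw [this]; ring

theorem stmt13 (β : ℝ) (hstar : ℝ) (hpos : 0 < hstar)
    (fstar : ℝ → ℝ) (hf : ThreeDiff fstar)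
    (heq : FSExtEq β hstar fstar)
    (hic1 : fstar 0 = 0) (hic2 : deriv fstar 0 = 0)
    (hbc : Tendsto (deriv fstar) atTop (𝓝 (hstar ^ ((1 : ℝ) / 2)))) :
    FSSol β (fun η => hstar ^ (-(1 : ℝ) / 4) * fstar (hstar ^ (-(1 : ℝ) / 4) * η)) := by
  set c := hstar ^ (-(1 : ℝ) / 4) with hc
  have hcpos : 0 < c := rpow_pos_of_pos hpos _
  obtain ⟨hd1, hd2, hd3⟩ := hf
  have hlin : Differentiable ℝ (fun η : ℝ => c * η) :=
    (differentiable_id.const_mul c)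
  have d1 : deriv (fun η => c * fstar (c * η)) = fun η => c * c * deriv fstar (c * η) :=
    scale_deriv fstar hd1 c c
  have d2 : deriv (deriv (fun η => c * fstar (c * η)))
      = fun η => c * c * c * deriv (deriv fstar) (c * η) := by
    rw [d1]
    have := scale_deriv (deriv fstar) hd2 (c * c) c
    rw [this]
  have d3 : deriv (deriv (deriv (fun η => c * fstar (c * η))))
      = fun η => c * c * c * c * deriv (deriv (deriv fstar)) (c * η) := by
    rw [d2]
    have := scale_deriv (deriv (deriv fstar)) hd3 (c * c * c) c
    rw [this]
  have k4 : c ^ 4 * hstar = 1 := by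
    have h4 : c ^ 4 = hstar ^ (-1 : ℝ) := by
      rw [hc, ← Real.rpow_natCast (hstar ^ (-(1 : ℝ) / 4)) 4, ← Real.rpow_mul hpos.le]
      norm_num
    rw [h4, Real.rpow_neg_one, inv_mul_cancel₀ hpos.ne']
  have k2 : c * c * hstar ^ ((1 : ℝ) / 2) = 1 := by
    have h2 : c * c = hstar ^ (-(1 : ℝ) / 2) := by
      rw [hc, ← Real.rpow_add hpos]; norm_num
    rw [h2, ← Real.rpow_add hpos]; norm_num
  refine ⟨⟨?_, ?_, ?_⟩, ?_, ?_, ?_, ?_⟩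
  · exact (hd1.comp hlin).const_mul c
  · rw [d1]; exact (hd2.comp hlin).const_mul (c * c)
  · rw [d2]; exact (hd3.comp hlin).const_mul (c * c * c)
  · intro η hη
    have hcη : (0 : ℝ) ≤ c * η := by positivity
    have E := heq (c * η) hcη
    rw [d3, d2, d1]
    simp only
    linear_combination (c * c * c * c) * E - β * k4
  · simp [hic1]
  · rw [d1]; simp [hic2]
  · rw [d1, ← k2]
    have hcomp : Tendsto (fun η : ℝ => c * η) atTop atTop :=
      Tendsto.const_mul_atTop hcpos tendsto_id
    simpa [Function.comp] using (hbc.comp hcomp).const_mul (c * c)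
end

section
/- Let β ∈ ℝ and let w₀ ≠ 0 be a real constant. Assume that for every h* > 0 there is exactly one three times differentiable function f*_{h*} : ℝ → ℝ satisfying the extended Falkner–Skan initial value problem f'''(η) + f(η) f''(η) + β (h* − (f'(η))²) = 0 for all η ≥ 0, f(0) = 0, f'(0) = 0, f''(0) = w₀; assume further that the limit L(h*) := lim_{η→∞} f*_{h*}'(η) exists with L(h*) > 0 for every h* > 0, and that every three times differentiable solution f of the Falkner–Skan model satisfies f''(0)/w₀ > 0. Define λ(h*) := L(h*)^{1/2} and Γ(h*) := λ(h*)^{−4} h* − 1. Then the map sending h* to the function η ↦ λ(h*)^{−1} · f*_{h*}(λ(h*)^{−1} η) is a bijection from { h* > 0 : Γ(h*) = 0 } onto the set of three times differentiable solutions of the Falkner–Skan model; in particular the Falkner–Skan model has a unique solution (respectively no solution, respectively more than one solution) if and only if Γ has a unique zero (respectively no zero, respectively more than one zero) in (0, ∞). -/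
open Real Filter Topology

def Fsc (c : ℝ) (f : ℝ → ℝ) : ℝ → ℝ := fun η => c * f (c * η)

lemma diff_smul_comp {g : ℝ → ℝ} (hg : Differentiable ℝ g) (a c : ℝ) :
    Differentiable ℝ (fun η => a * g (c * η)) :=
  ((hg.comp (differentiable_id.const_mul c))).const_mul a

lemma deriv_smul_comp {g : ℝ → ℝ} (hg : Differentiable ℝ g) (a c : ℝ) :
    deriv (fun η => a * g (c * η)) = fun η => a * c * deriv g (c * η) := by
  funext η
  have h1 : HasDerivAt (fun η : ℝ => g (c * η)) (deriv g (c * η) * (c * 1)) η :=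
    (hg (c * η)).hasDerivAt.comp η ((hasDerivAt_id η).const_mul c)
  have h2 := h1.const_mul a
  rw [h2.deriv]; ring

lemma Fsc_deriv1 {f : ℝ → ℝ} (hf : ThreeDiff f) (c : ℝ) :
    deriv (Fsc c f) = fun η => c * c * deriv f (c * η) :=
  deriv_smul_comp hf.1 c c

lemma Fsc_deriv2 {f : ℝ → ℝ} (hf : ThreeDiff f) (c : ℝ) :
    deriv (deriv (Fsc c f)) = fun η => c * c * c * deriv (deriv f) (c * η) := by
  rw [Fsc_deriv1 hf, deriv_smul_comp hf.2.1 (c*c) c]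

lemma Fsc_deriv3 {f : ℝ → ℝ} (hf : ThreeDiff f) (c : ℝ) :
    deriv (deriv (deriv (Fsc c f))) = fun η => c * c * c * c * deriv (deriv (deriv f)) (c * η) := by
  rw [Fsc_deriv2 hf, deriv_smul_comp hf.2.2 (c*c*c) c]

lemma Fsc_threeDiff {f : ℝ → ℝ} (hf : ThreeDiff f) (c : ℝ) : ThreeDiff (Fsc c f) := by
  refine ⟨diff_smul_comp hf.1 c c, ?_, ?_⟩
  · rw [Fsc_deriv1 hf]; exact diff_smul_comp hf.2.1 (c*c) c
  · rw [Fsc_deriv2 hf]; exact diff_smul_comp hf.2.2 (c*c*c) c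

lemma Fsc_fse {β h c : ℝ} (hc : 0 < c) {f : ℝ → ℝ} (hf : ThreeDiff f)
    (he : FSExtEq β h f) : FSExtEq β (c ^ 4 * h) (Fsc c f) := by
  intro η hη
  have key := he (c * η) (by positivity)
  simp only [Fsc_deriv3 hf]
  simp only [Fsc_deriv2 hf]
  simp only [Fsc_deriv1 hf]
  simp only [Fsc]
  linear_combination (c ^ 4) * key

lemma Fsc_tendsto {f : ℝ → ℝ} (hf : ThreeDiff f) {c l : ℝ} (hc : 0 < c)
    (hl : Tendsto (deriv f) atTop (𝓝 l)) :
    Tendsto (deriv (Fsc c f)) atTop (𝓝 (c * c * l)) := by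
  rw [Fsc_deriv1 hf]
  exact (hl.comp (tendsto_id.const_mul_atTop hc)).const_mul (c * c)

lemma Fsc_comp (c d : ℝ) (f : ℝ → ℝ) : Fsc c (Fsc d f) = Fsc (c * d) f := by
  funext η
  show c * (d * f (d * (c * η))) = (c * d) * f ((c * d) * η)
  rw [show d * (c * η) = (c * d) * η by ring]; ring

lemma Fsc_one (f : ℝ → ℝ) : Fsc 1 f = f := by
  funext η; simp [Fsc]

lemma cube_inj {a b : ℝ} (ha : 0 < a) (hb : 0 < b) (h : a ^ 3 = b ^ 3) : a = b := by
  nlinarith [mul_pos ha hb, sq_nonneg (a - b), sq_nonneg (a + b), mul_pos (mul_pos ha ha) hb, mul_pos (mul_pos ha hb) hb]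

lemma transfer {α β : Type*} {Φ : α → β} {S : Set α} {T : Set β} (hb : Set.BijOn Φ S T) :
    ((∃! y, y ∈ T) ↔ (∃! x, x ∈ S)) ∧ ((¬ ∃ y, y ∈ T) ↔ ¬ ∃ x, x ∈ S) ∧
    ((∃ y₁ y₂, y₁ ∈ T ∧ y₂ ∈ T ∧ y₁ ≠ y₂) ↔ (∃ x₁ x₂, x₁ ∈ S ∧ x₂ ∈ S ∧ x₁ ≠ x₂)) := by
  obtain ⟨hmap, hinj, hsurj⟩ := hb
  refine ⟨⟨?_, ?_⟩, not_congr ⟨?_, ?_⟩, ⟨?_, ?_⟩⟩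
  · rintro ⟨y, hy, huniq⟩
    obtain ⟨x, hx, hxy⟩ := hsurj hy
    exact ⟨x, hx, fun x' hx' => hinj hx' hx (by rw [hxy, huniq _ (hmap hx')])⟩
  · rintro ⟨x, hx, huniq⟩
    refine ⟨Φ x, hmap hx, fun y' hy' => ?_⟩
    obtain ⟨x', hx', hxy'⟩ := hsurj hy'
    rw [← hxy', huniq _ hx']
  · rintro ⟨y, hy⟩; obtain ⟨x, hx, _⟩ := hsurj hy; exact ⟨x, hx⟩
  · rintro ⟨x, hx⟩; exact ⟨Φ x, hmap hx⟩
  · rintro ⟨y₁, y₂, hy₁, hy₂, hne⟩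
    obtain ⟨x₁, hx₁, e₁⟩ := hsurj hy₁
    obtain ⟨x₂, hx₂, e₂⟩ := hsurj hy₂
    exact ⟨x₁, x₂, hx₁, hx₂, fun h => hne (by rw [← e₁, ← e₂, h])⟩
  · rintro ⟨x₁, x₂, hx₁, hx₂, hne⟩
    exact ⟨Φ x₁, Φ x₂, hmap hx₁, hmap hx₂, fun h => hne (hinj hx₁ hx₂ h)⟩
theorem stmt15 (β w₀ : ℝ) (hw₀ : w₀ ≠ 0) (fstar : ℝ → ℝ → ℝ) (L : ℝ → ℝ)
    -- existence and uniqueness of the solution of the extended Falkner–Skan IVP for every h* > 0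
    (hivp_ex : ∀ h : ℝ, 0 < h →
      ThreeDiff (fstar h) ∧ FSExtEq β h (fstar h) ∧
      fstar h 0 = 0 ∧ deriv (fstar h) 0 = 0 ∧ deriv (deriv (fstar h)) 0 = w₀)
    (hivp_uniq : ∀ h : ℝ, 0 < h → ∀ g : ℝ → ℝ,
      ThreeDiff g → FSExtEq β h g → g 0 = 0 → deriv g 0 = 0 →
      deriv (deriv g) 0 = w₀ → g = fstar h)
    -- the limit of the first derivative at infinity exists and is positive
    (hlim : ∀ h : ℝ, 0 < h → Tendsto (deriv (fstar h)) atTop (𝓝 (L h)))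
    (hLpos : ∀ h : ℝ, 0 < h → 0 < L h)
    -- every solution of the Falkner–Skan model satisfies f''(0)/w₀ > 0
    (hsign : ∀ f : ℝ → ℝ, FSSol β f → 0 < deriv (deriv f) 0 / w₀)
    (lam Γ : ℝ → ℝ)
    (hlam : ∀ h : ℝ, lam h = L h ^ ((1 : ℝ) / 2))
    (hΓ : ∀ h : ℝ, Γ h = (lam h ^ 4)⁻¹ * h - 1) :
    Set.BijOn (fun h : ℝ => fun η : ℝ => (lam h)⁻¹ * fstar h ((lam h)⁻¹ * η))
      {h : ℝ | 0 < h ∧ Γ h = 0} {f : ℝ → ℝ | FSSol β f} ∧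
    ((∃! f : ℝ → ℝ, FSSol β f) ↔ (∃! h : ℝ, 0 < h ∧ Γ h = 0)) ∧
    ((¬ ∃ f : ℝ → ℝ, FSSol β f) ↔ (¬ ∃ h : ℝ, 0 < h ∧ Γ h = 0)) ∧
    ((∃ f₁ f₂ : ℝ → ℝ, FSSol β f₁ ∧ FSSol β f₂ ∧ f₁ ≠ f₂) ↔
      (∃ h₁ h₂ : ℝ, (0 < h₁ ∧ Γ h₁ = 0) ∧ (0 < h₂ ∧ Γ h₂ = 0) ∧ h₁ ≠ h₂)) := by
  -- basic facts about lam on the zero set of Γ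
  have hlampos : ∀ h : ℝ, 0 < h → 0 < lam h := fun h hh => by
    rw [hlam]; exact Real.rpow_pos_of_pos (hLpos h hh) _
  have hlamsq : ∀ h : ℝ, 0 < h → lam h ^ 2 = L h := fun h hh => by
    rw [hlam, ← Real.rpow_natCast (L h ^ ((1:ℝ)/2)) 2, ← Real.rpow_mul (hLpos h hh).le]
    norm_num
  have hlam4 : ∀ h : ℝ, 0 < h → Γ h = 0 → lam h ^ 4 = h := fun h hh hΓ0 => by
    have := hΓ h
    rw [hΓ0] at this
    have hne : lam h ^ 4 ≠ 0 := (pow_pos (hlampos h hh) 4).ne'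
    field_simp at this
    rw [eq_sub_iff_add_eq, zero_add, eq_div_iff hne] at this
    linarith
  -- the map sends the zero set into the solution set, with (second deriv at 0) = (lam h)⁻³ w₀
  have hmaps : ∀ h : ℝ, 0 < h → Γ h = 0 → FSSol β (Fsc (lam h)⁻¹ (fstar h)) := by
    intro h hh hΓ0
    obtain ⟨htd, hfse, h0, h1, _⟩ := hivp_ex h hh
    have hc : 0 < (lam h)⁻¹ := inv_pos.mpr (hlampos h hh)
    have hne : lam h ≠ 0 := (hlampos h hh).ne'
    refine ⟨Fsc_threeDiff htd _, ?_, ?_, ?_, ?_⟩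
    · have hsc := Fsc_fse hc htd hfse
      have he1 : (lam h)⁻¹ ^ 4 * h = 1 := by
        rw [inv_pow, hlam4 h hh hΓ0]
        exact inv_mul_cancel₀ hh.ne'
      rwa [he1] at hsc
    · show (lam h)⁻¹ * fstar h ((lam h)⁻¹ * 0) = 0
      rw [mul_zero, h0, mul_zero]
    · rw [Fsc_deriv1 htd]
      simp [h1]
    · have := Fsc_tendsto htd hc (hlim h hh)
      have he2 : (lam h)⁻¹ * (lam h)⁻¹ * L h = 1 := by
        rw [← hlamsq h hh]; field_simp
      rwa [he2] at this
  have hd2 : ∀ h : ℝ, 0 < h →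
      deriv (deriv (Fsc (lam h)⁻¹ (fstar h))) 0 = (lam h)⁻¹ ^ 3 * w₀ := by
    intro h hh
    obtain ⟨htd, _, _, _, h2⟩ := hivp_ex h hh
    rw [Fsc_deriv2 htd]
    simp only [mul_zero, h2]
    ring
  have hbij : Set.BijOn (fun h : ℝ => Fsc (lam h)⁻¹ (fstar h))
      {h : ℝ | 0 < h ∧ Γ h = 0} {f : ℝ → ℝ | FSSol β f} := by
    refine ⟨fun h hm => hmaps h hm.1 hm.2, ?_, ?_⟩
    · -- injectivity
      intro h₁ hm₁ h₂ hm₂ heq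
      have e1 := hd2 h₁ hm₁.1
      have e2 := hd2 h₂ hm₂.1
      have heq' : Fsc (lam h₁)⁻¹ (fstar h₁) = Fsc (lam h₂)⁻¹ (fstar h₂) := heq
      rw [heq'] at e1
      rw [e2] at e1
      have hcube : (lam h₂)⁻¹ ^ 3 = (lam h₁)⁻¹ ^ 3 := mul_right_cancel₀ hw₀ e1
      have hp1 : 0 < (lam h₁)⁻¹ := by have := hlampos h₁ hm₁.1; positivity
      have hp2 : 0 < (lam h₂)⁻¹ := by have := hlampos h₂ hm₂.1; positivity
      have : (lam h₂)⁻¹ = (lam h₁)⁻¹ := cube_inj hp2 hp1 hcube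
      have hll : lam h₁ = lam h₂ := by
        have := inv_inj.mp this; exact this.symm
      rw [← hlam4 h₁ hm₁.1 hm₁.2, ← hlam4 h₂ hm₂.1 hm₂.2, hll]
    · -- surjectivity
      intro f hf
      obtain ⟨htd, hfse, h0, h1, h2⟩ := hf
      have hsgn := hsign f ⟨htd, hfse, h0, h1, h2⟩
      set w := deriv (deriv f) 0 with hwdef
      have hwne : w ≠ 0 := by
        intro hzero
        rw [hzero] at hsgn
        simp at hsgn
      have hpos' : 0 < w₀ / w := by
        rcases div_pos_iff.mp hsgn with ⟨ha, hb⟩ | ⟨ha, hb⟩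
        · exact div_pos hb ha
        · exact div_pos_of_neg_of_neg hb ha
      set a := (w₀ / w) ^ ((1:ℝ)/3) with hadef
      have ha : 0 < a := Real.rpow_pos_of_pos hpos' _
      have ha3 : a ^ 3 = w₀ / w := by
        rw [hadef, ← Real.rpow_natCast ((w₀ / w) ^ ((1:ℝ)/3)) 3, ← Real.rpow_mul hpos'.le]
        norm_num
      set h := a ^ 4 with hhdef
      have hh : 0 < h := by positivity
      have hg_fse : FSExtEq β h (Fsc a f) := by
        have := Fsc_fse ha htd hfse
        rwa [mul_one] at this
      have hg0 : Fsc a f 0 = 0 := by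
        show a * f (a * 0) = 0
        rw [mul_zero, h0, mul_zero]
      have hg1 : deriv (Fsc a f) 0 = 0 := by
        rw [Fsc_deriv1 htd]; simp [h1]
      have hg2 : deriv (deriv (Fsc a f)) 0 = w₀ := by
        rw [Fsc_deriv2 htd]
        simp only [mul_zero, ← hwdef]
        have : a * a * a = w₀ / w := by rw [← ha3]; ring
        rw [this, div_mul_cancel₀ _ hwne]
      have hgeq : Fsc a f = fstar h :=
        hivp_uniq h hh (Fsc a f) (Fsc_threeDiff htd a) hg_fse hg0 hg1 hg2
      have hLh : L h = a * a * 1 :=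
        tendsto_nhds_unique (hlim h hh) (hgeq ▸ Fsc_tendsto htd ha h2)
      have hlamh : lam h = a := by
        rw [hlam, hLh, mul_one, show a * a = a ^ (2:ℕ) by ring,
          ← Real.rpow_natCast a 2, ← Real.rpow_mul ha.le]
        norm_num
      have hΓ0 : Γ h = 0 := by
        rw [hΓ, hlamh, hhdef]
        have : a ^ 4 ≠ 0 := by positivity
        field_simp
        norm_num
      refine ⟨h, ⟨hh, hΓ0⟩, ?_⟩
      show Fsc (lam h)⁻¹ (fstar h) = f
      rw [← hgeq, hlamh, Fsc_comp, inv_mul_cancel₀ ha.ne', Fsc_one]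
  obtain ⟨t1, t2, t3⟩ := transfer hbij
  exact ⟨hbij, t1, t2, t3⟩
end
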